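/- arXiv:1908.07204 — 4 statements merged into one kernel-verified Lean document; each statement's English description precedes it below -/
import Mathlib

section
/- Consider a hidden Markov model with initial density p(x_0), transition densities p(x_{t+1}|x_t), and measurement densities p(y_t|x_t). Run the data-driven particle filter with L cyclic-permutation matching (1 ≤ L ≤ N): draw x_0^{[j]} i.i.d. from p(x_0) with π_0^{[j]} = 1/N; at each step draw x_{t+1}^{[j]} i.i.d. from a positive proposal density g_{t+1}(·), set w_{t+1}^{[j]} = (1/L) ∑_{l=1}^L π_t^{[k_{l,j}]} p(y_{t+1}|x_{t+1}^{[j]}) p(x_{t+1}^{[j]}|x_t^{[k_{l,j}]}) / g_{t+1}(x_{t+1}^{[j]}), π_{t+1}^{[j]} ∝ w_{t+1}^{[j]}, and define p̂(y_{1:T}) = ∏_{t=1}^T ∑_{j=1}^N w_t^{[j]}. Then E[p̂(y_{1:T})] = p(y_{1:T}) = ∫⋯∫ p(x_0) ∏_{t=1}^T p(y_t|x_t) p(x_t|x_{t−1}) dx_{0:T}. (Theorem 1: unbiasedness of the DPF likelihood estimator.) -/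
open MeasureTheory Finset
open Fin.NatCast

section DPF

variable (N L : ℕ) [NeZero N]
variable (pobs : ℕ → ℝ → ℝ) (ptrans : ℕ → ℝ → ℝ → ℝ) (g : ℕ → ℝ → ℝ)

/-- Unnormalized DPF weight at time `t ≥ 1` for particle `j`, given the
particle array `u` and previous normalized weights `πprev`, with `L`
cyclic-permutation matches. -/
noncomputable def dpfStepW (u : ℕ → Fin N → ℝ) (t : ℕ) (πprev : Fin N → ℝ)
    (j : Fin N) : ℝ :=
  (L : ℝ)⁻¹ * ∑ l ∈ Finset.range L,
    πprev (j + (l : Fin N)) * pobs t (u t j) *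
      ptrans t (u (t - 1) (j + (l : Fin N))) (u t j) / g t (u t j)

/-- Normalized DPF weights `π_t^{[j]}`, defined recursively: `π_0 = 1/N` and
`π_{t+1} ∝ w_{t+1}`. -/
noncomputable def dpfPi (u : ℕ → Fin N → ℝ) : ℕ → Fin N → ℝ
  | 0 => fun _ => (N : ℝ)⁻¹
  | (t + 1) => fun j =>
      dpfStepW N L pobs ptrans g u (t + 1) (dpfPi u t) j /
        ∑ k : Fin N, dpfStepW N L pobs ptrans g u (t + 1) (dpfPi u t) k

/-- Unnormalized DPF weight `w_t^{[j]}` (for `t ≥ 1`). -/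
noncomputable def dpfW (u : ℕ → Fin N → ℝ) (t : ℕ) (j : Fin N) : ℝ :=
  dpfStepW N L pobs ptrans g u t (dpfPi N L pobs ptrans g u (t - 1)) j

/-- The DPF likelihood estimator `p̂(y_{1:T}) = ∏_{t=1}^T ∑_j w_t^{[j]}`. -/
noncomputable def dpfLikeEst (T : ℕ) (u : ℕ → Fin N → ℝ) : ℝ :=
  ∏ t ∈ Finset.Icc 1 T, ∑ j : Fin N, dpfW N L pobs ptrans g u t j

end DPF

/-!
Let `S_t^{[j]}` be the DPF weights computed without the normalisation at each step. Normalising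
only rescales all weights by the current total, so `S_t = (∏_{s ≤ t} ∑_j w_s^{[j]}) • π_t` and
`p̂(y_{1:T}) = ∑_j S_T^{[j]}`.

Integrating out the newest particle layer, drawn i.i.d. from `g_{t+1}`, turns
`∑_j S_{t+1}^{[j]} φ(x_{t+1}^{[j]})` into `∑_k S_t^{[k]} (Qφ)(x_t^{[k]})` with
`Qφ(x) = ∫ p(y_{t+1}|x') p(x'|x) φ(x') dx'`: the proposal density cancels the importance weight,
and each ancestor `k` is matched exactly once by each of the `L` cyclic shifts, which cancels the
factor `1/L`. By induction on `T`, the expectation of `∑_j S_T^{[j]} φ(x_T^{[j]})` is the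
unnormalised filter `∫ p(x_0) ∏_t p(y_t|x_t) p(x_t|x_{t-1}) φ(x_T) dx_{0:T}`, whatever `N` and `L`
are. The right-hand side of the theorem is the case `N = L = 1`, where the estimator times the
sampling density is exactly the path integrand.
-/

open scoped ENNReal

section PiIntegrals

variable {ι : Type*} [Fintype ι]

theorem lmarginal_prod [DecidableEq ι] {α : ι → Type*} [∀ i, MeasurableSpace (α i)]
    (μ : ∀ i, Measure (α i)) [∀ i, SigmaFinite (μ i)] {f : ∀ i, α i → ℝ≥0∞}
    (hf : ∀ i, Measurable (f i)) (s : Finset ι) (x : ∀ i, α i) :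
    (∫⋯∫⁻_s, (fun y => ∏ i, f i (y i)) ∂μ) x
      = (∏ i ∈ s, ∫⁻ y, f i y ∂μ i) * ∏ i ∈ sᶜ, f i (x i) := by
  induction s using Finset.induction generalizing x with
  | empty => rw [lmarginal_empty, prod_empty, one_mul, compl_empty]
  | @insert i s hi ih =>
    have hF : Measurable fun y : ∀ i, α i => ∏ i, f i (y i) := by fun_prop
    have hslice : ∀ y : α i, (∫⋯∫⁻_s, (fun y => ∏ i, f i (y i)) ∂μ) (Function.update x i y)
        = ((∏ i ∈ s, ∫⁻ y, f i y ∂μ i) * ∏ k ∈ sᶜ.erase i, f k (x k)) * f i y := fun y => by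
      have hrest :
          ∏ k ∈ sᶜ.erase i, f k (Function.update x i y k) = ∏ k ∈ sᶜ.erase i, f k (x k) :=
        prod_congr rfl fun k hk => by rw [Function.update_of_ne (ne_of_mem_erase hk)]
      rw [ih, ← mul_prod_erase sᶜ (fun k => f k (Function.update x i y k)) (mem_compl.mpr hi),
        Function.update_self, hrest]
      ring
    rw [lmarginal_insert _ hF hi x]
    simp_rw [hslice]
    rw [lintegral_const_mul _ (hf i), prod_insert hi, compl_insert]
    ring

theorem lintegral_pi_prod {α : ι → Type*} [∀ i, MeasurableSpace (α i)]
    (μ : ∀ i, Measure (α i)) [∀ i, SigmaFinite (μ i)] {f : ∀ i, α i → ℝ≥0∞}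
    (hf : ∀ i, Measurable (f i)) :
    ∫⁻ x, ∏ i, f i (x i) ∂Measure.pi μ = ∏ i, ∫⁻ y, f i y ∂μ i := by
  classical
  rcases isEmpty_or_nonempty (∀ i, α i) with hα | ⟨⟨x⟩⟩
  · obtain ⟨i, hi⟩ := isEmpty_pi.mp hα
    rw [lintegral_of_isEmpty, prod_eq_zero (mem_univ i) (lintegral_of_isEmpty _ _)]
  · rw [lintegral_eq_lmarginal_univ x, lmarginal_prod μ hf, compl_univ, prod_empty, mul_one]

variable {α : Type*} [MeasurableSpace α] {μ : Measure α} [SigmaFinite μ] {G : α → ℝ≥0∞}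

theorem lintegral_pi_mul_prod_of_lintegral_eq_one {f : α → ℝ≥0∞} (hf : Measurable f)
    (hG : Measurable G) (hG1 : ∫⁻ z, G z ∂μ = 1) (j : ι) :
    ∫⁻ a : ι → α, f (a j) * ∏ i, G (a i) ∂Measure.pi (fun _ => μ) = ∫⁻ z, f z * G z ∂μ := by
  classical
  set F : ι → α → ℝ≥0∞ := fun i z => (if i = j then f z else 1) * G z
  have hsplit : ∀ a : ι → α, f (a j) * ∏ i, G (a i) = ∏ i, F i (a i) := fun a => by
    rw [prod_mul_distrib, Fintype.prod_ite_eq']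
  rw [lintegral_congr hsplit, lintegral_pi_prod _ fun i => by simp only [F]; split_ifs <;> fun_prop,
    Fintype.prod_eq_single j fun i hi => by simp only [F, if_neg hi, one_mul, hG1]]
  simp only [F, if_true]

theorem lintegral_pi_div_mul_prod (hG : Measurable G) (hG1 : ∫⁻ z, G z ∂μ = 1)
    (hG0 : ∀ z, G z ≠ 0) (hGtop : ∀ z, G z ≠ ∞) {f : α → ℝ≥0∞} (hf : Measurable f) (j : ι) :
    ∫⁻ a : ι → α, f (a j) / G (a j) * ∏ i, G (a i) ∂Measure.pi (fun _ => μ)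
      = ∫⁻ z, f z ∂μ := by
  rw [lintegral_pi_mul_prod_of_lintegral_eq_one (f := fun z => f z / G z) (by fun_prop) hG hG1]
  exact lintegral_congr fun z => ENNReal.div_mul_cancel (hG0 z) (hGtop z)

theorem lintegral_pi_sum_mul_prod_of_lintegral_eq_one {f : α → ℝ≥0∞} (hf : Measurable f)
    (hG : Measurable G) (hG1 : ∫⁻ z, G z ∂μ = 1) :
    ∫⁻ a : ι → α, (∑ j, f (a j)) * ∏ i, G (a i) ∂Measure.pi (fun _ => μ)
      = Fintype.card ι * ∫⁻ z, f z * G z ∂μ := by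
  simp_rw [sum_mul]
  rw [lintegral_finsetSum _ fun j _ => by fun_prop]
  simp_rw [lintegral_pi_mul_prod_of_lintegral_eq_one hf hG hG1]
  rw [sum_const, card_univ, nsmul_eq_mul]

end PiIntegrals

section CyclicImportance

variable {α : Type*} [MeasurableSpace α] {μ : Measure α} [SigmaFinite μ] {G : α → ℝ≥0∞}
  {ι : Type*} [Fintype ι] [AddGroup ι]

theorem sum_range_sum_add_shift {M : Type*} [AddCommMonoid M] (L : ℕ) (shift : ℕ → ι)
    (h : ι → M) : ∑ l ∈ range L, ∑ j, h (j + shift l) = L • ∑ j, h j := by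
  have hshift : ∀ l, ∑ j, h (j + shift l) = ∑ j, h j := fun l =>
    Equiv.sum_comp (Equiv.addRight (shift l)) h
  rw [sum_congr rfl fun l _ => hshift l, sum_const, card_range]

theorem lintegral_pi_cyclic_importance_sum (hG : Measurable G) (hG1 : ∫⁻ z, G z ∂μ = 1)
    (hG0 : ∀ z, G z ≠ 0) (hGtop : ∀ z, G z ≠ ∞) {L : ℕ} (hL : L ≠ 0) (shift : ℕ → ι)
    (c : ι → ℝ≥0∞) {K : ι → α → ℝ≥0∞} (hK : ∀ i, Measurable (K i)) {φ : α → ℝ≥0∞}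
    (hφ : Measurable φ) :
    ∫⁻ a : ι → α, (∑ j, ((L : ℝ≥0∞)⁻¹ * ∑ l ∈ range L,
        c (j + shift l) * K (j + shift l) (a j) / G (a j)) * φ (a j)) * ∏ i, G (a i)
      ∂Measure.pi (fun _ => μ) = ∑ i, c i * ∫⁻ z, K i z * φ z ∂μ := by
  have hexpand : ∀ a : ι → α, (∑ j, ((L : ℝ≥0∞)⁻¹ * ∑ l ∈ range L,
        c (j + shift l) * K (j + shift l) (a j) / G (a j)) * φ (a j)) * ∏ i, G (a i)
      = ∑ j, ∑ l ∈ range L, (L : ℝ≥0∞)⁻¹ * c (j + shift l) *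
          (K (j + shift l) (a j) * φ (a j) / G (a j) * ∏ i, G (a i)) := fun a => by
    simp only [sum_mul, mul_sum, div_eq_mul_inv]
    exact sum_congr rfl fun j _ => sum_congr rfl fun l _ => by ring
  calc _ = ∑ j, ∑ l ∈ range L,
          (L : ℝ≥0∞)⁻¹ * c (j + shift l) * ∫⁻ z, K (j + shift l) z * φ z ∂μ := by
        rw [lintegral_congr hexpand, lintegral_finsetSum _ fun j _ => by fun_prop]
        refine sum_congr rfl fun j _ => ?_
        rw [lintegral_finsetSum _ fun l _ => by fun_prop]
        refine sum_congr rfl fun l _ => ?_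
        rw [lintegral_const_mul _ (by fun_prop)]
        exact congrArg _ (lintegral_pi_div_mul_prod hG hG1 hG0 hGtop
          (f := fun z => K (j + shift l) z * φ z) (by fun_prop) j)
    _ = (L : ℝ≥0∞)⁻¹ * ∑ l ∈ range L, ∑ j,
          (fun i => c i * ∫⁻ z, K i z * φ z ∂μ) (j + shift l) := by
        simp only [sum_comm (s := univ), mul_sum, mul_assoc]
    _ = _ := by
        rw [sum_range_sum_add_shift L shift fun i => c i * ∫⁻ z, K i z * φ z ∂μ, nsmul_eq_mul,
          ← mul_assoc, ENNReal.inv_mul_cancel (by exact_mod_cast hL) (ENNReal.natCast_ne_top L),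
          one_mul]

end CyclicImportance

theorem lintegral_pi_fin_succ {α : Type*} [MeasurableSpace α] (μ : Measure α) [SigmaFinite μ]
    {n : ℕ} {F : (Fin (n + 1) → α) → ℝ≥0∞} (hF : Measurable F) :
    ∫⁻ v, F v ∂Measure.pi (fun _ => μ)
      = ∫⁻ w, ∫⁻ a, F (Fin.snoc w a) ∂μ ∂Measure.pi (fun _ => μ) := by
  set e := (MeasurableEquiv.piFinSuccAbove (fun _ => α) (Fin.last n)).symm
  rw [MeasurePreserving.lintegral_map_equiv F e
      (measurePreserving_piFinSuccAbove (fun _ => μ) (Fin.last n)).symm,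
    lintegral_prod_symm' (fun p => F (e p)) (hF.comp e.measurable)]
  exact lintegral_congr fun w => lintegral_congr fun a => congrArg F (Fin.insertNth_last' a w)

theorem Fin.snoc_natCast_of_le {α : Type*} {T s : ℕ} (w : Fin (T + 1) → α) (a : α) (hs : s ≤ T) :
    (Fin.snoc w a : Fin (T + 2) → α) s = w s := by
  have hcast : ((s : ℕ) : Fin (T + 2)) = Fin.castSucc (s : Fin (T + 1)) := by
    ext; rw [Fin.val_castSucc, Fin.val_cast_of_lt (by omega), Fin.val_cast_of_lt (by omega)]
  rw [hcast, Fin.snoc_castSucc]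

theorem lintegral_ofReal_eq_one {α : Type*} [MeasurableSpace α] {μ : Measure α} {f : α → ℝ}
    (h0 : ∀ x, 0 ≤ f x) (h1 : ∫ x, f x ∂μ = 1) : ∫⁻ x, ENNReal.ofReal (f x) ∂μ = 1 := by
  rw [← ofReal_integral_eq_lintegral_ofReal (Integrable.of_integral_ne_zero (by simp [h1]))
    (ae_of_all _ h0), h1, ENNReal.ofReal_one]

theorem prod_fin_succ_eq_mul_prod_Icc {M : Type*} [CommMonoid M] (T : ℕ) (f : ℕ → M) :
    ∏ s : Fin (T + 1), f s = f 0 * ∏ t ∈ Icc 1 T, f t := by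
  rw [Fin.prod_univ_eq_prod_range, range_eq_Ico, prod_eq_prod_Ico_succ_bot T.succ_pos, zero_add,
    Nat.succ_eq_add_one, Ico_add_one_right_eq_Icc]

section Weights

variable {N L : ℕ} [NeZero N] {pobs : ℕ → ℝ → ℝ} {ptrans : ℕ → ℝ → ℝ → ℝ} {g : ℕ → ℝ → ℝ}

variable (N L pobs ptrans g) in
noncomputable def dpfUnnormPi (u : ℕ → Fin N → ℝ) : ℕ → Fin N → ℝ
  | 0 => fun _ => (N : ℝ)⁻¹
  | t + 1 => dpfStepW N L pobs ptrans g u (t + 1) (dpfUnnormPi u t)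

theorem dpfStepW_nonneg (hpobs0 : ∀ t x, 0 ≤ pobs t x) (hptrans0 : ∀ t x x', 0 ≤ ptrans t x x')
    (hg0 : ∀ t x, 0 ≤ g t x) {u : ℕ → Fin N → ℝ} {t : ℕ} {π : Fin N → ℝ} (hπ : 0 ≤ π) :
    0 ≤ dpfStepW N L pobs ptrans g u t π := fun j =>
  mul_nonneg (by positivity) <| sum_nonneg fun l _ =>
    div_nonneg (mul_nonneg (mul_nonneg (hπ _) (hpobs0 _ _)) (hptrans0 _ _ _)) (hg0 _ _)

theorem dpfPi_nonneg (hpobs0 : ∀ t x, 0 ≤ pobs t x) (hptrans0 : ∀ t x x', 0 ≤ ptrans t x x')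
    (hg0 : ∀ t x, 0 ≤ g t x) (u : ℕ → Fin N → ℝ) (t : ℕ) : 0 ≤ dpfPi N L pobs ptrans g u t := by
  induction t with
  | zero => intro j; simp only [dpfPi]; positivity
  | succ t ih =>
    have hw := dpfStepW_nonneg (L := L) (u := u) (t := t + 1) hpobs0 hptrans0 hg0 ih
    exact fun j => div_nonneg (hw j) (sum_nonneg fun k _ => hw k)

theorem dpfUnnormPi_nonneg (hpobs0 : ∀ t x, 0 ≤ pobs t x)
    (hptrans0 : ∀ t x x', 0 ≤ ptrans t x x') (hg0 : ∀ t x, 0 ≤ g t x) (u : ℕ → Fin N → ℝ) :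
    ∀ t, 0 ≤ dpfUnnormPi N L pobs ptrans g u t
  | 0 => fun _ => by simp only [dpfUnnormPi]; positivity
  | t + 1 => dpfStepW_nonneg hpobs0 hptrans0 hg0 (dpfUnnormPi_nonneg hpobs0 hptrans0 hg0 u t)

theorem dpfStepW_smul (u : ℕ → Fin N → ℝ) (t : ℕ) (c : ℝ) (π : Fin N → ℝ) :
    dpfStepW N L pobs ptrans g u t (c • π) = c • dpfStepW N L pobs ptrans g u t π := by
  ext j
  simp only [dpfStepW, Pi.smul_apply, smul_eq_mul, mul_sum]
  exact sum_congr rfl fun l _ => by ring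

theorem dpfUnnormPi_eq_smul_dpfPi (hpobs0 : ∀ t x, 0 ≤ pobs t x)
    (hptrans0 : ∀ t x x', 0 ≤ ptrans t x x') (hg0 : ∀ t x, 0 ≤ g t x) (u : ℕ → Fin N → ℝ)
    (t : ℕ) : dpfUnnormPi N L pobs ptrans g u t
      = (∏ s ∈ Icc 1 t, ∑ k, dpfW N L pobs ptrans g u s k) • dpfPi N L pobs ptrans g u t := by
  induction t with
  | zero => ext j; simp [dpfUnnormPi, dpfPi]
  | succ t ih =>
    set w := dpfW N L pobs ptrans g u (t + 1)
    have hw : 0 ≤ w := dpfStepW_nonneg hpobs0 hptrans0 hg0 (dpfPi_nonneg hpobs0 hptrans0 hg0 u t)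
    -- a zero total weight forces every weight to vanish, so the junk value `w j / 0` is harmless
    have hcancel : ∀ j, (∑ k, w k) * (w j / ∑ k, w k) = w j := fun j => by
      by_cases h : ∑ k, w k = 0
      · rw [h, (sum_eq_zero_iff_of_nonneg fun k _ => hw k).mp h j (mem_univ j), div_zero, mul_zero]
      · exact mul_div_cancel₀ _ h
    ext j
    change dpfStepW N L pobs ptrans g u (t + 1) (dpfUnnormPi N L pobs ptrans g u t) j = _
    rw [ih, dpfStepW_smul, prod_Icc_succ_top (by omega), Pi.smul_apply, Pi.smul_apply,
      smul_eq_mul, smul_eq_mul, mul_assoc]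
    exact congrArg _ (hcancel j).symm

theorem dpfLikeEst_eq_sum_dpfUnnormPi (hpobs0 : ∀ t x, 0 ≤ pobs t x)
    (hptrans0 : ∀ t x x', 0 ≤ ptrans t x x') (hg0 : ∀ t x, 0 ≤ g t x) (u : ℕ → Fin N → ℝ)
    (T : ℕ) : dpfLikeEst N L pobs ptrans g T u = ∑ j, dpfUnnormPi N L pobs ptrans g u T j := by
  simp only [dpfUnnormPi_eq_smul_dpfPi hpobs0 hptrans0 hg0, Pi.smul_apply, smul_eq_mul,
    ← mul_sum, dpfLikeEst]
  cases T with
  | zero => simp [dpfPi]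
  | succ t =>
    set w := dpfW N L pobs ptrans g u (t + 1)
    have hsum : ∑ j, dpfPi N L pobs ptrans g u (t + 1) j = (∑ k, w k) / ∑ k, w k := by
      rw [sum_div]; rfl
    rw [hsum, prod_Icc_succ_top (by omega), mul_assoc, ← mul_div_assoc, mul_self_div_self]

theorem dpfUnnormPi_congr {u u' : ℕ → Fin N → ℝ} {t : ℕ} (h : ∀ s ≤ t, u s = u' s) :
    dpfUnnormPi N L pobs ptrans g u t = dpfUnnormPi N L pobs ptrans g u' t := by
  induction t with
  | zero => rfl
  | succ t ih =>
    ext j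
    simp only [dpfUnnormPi, dpfStepW, Nat.add_sub_cancel, h (t + 1) le_rfl, h t (by omega),
      ih fun s hs => h s (by omega)]

theorem measurable_dpfUnnormPi {β : Type*} [MeasurableSpace β] (hpobs : ∀ t, Measurable (pobs t))
    (hptrans : ∀ t, Measurable fun q : ℝ × ℝ => ptrans t q.1 q.2) (hg : ∀ t, Measurable (g t))
    {u : β → ℕ → Fin N → ℝ} (hu : ∀ s j, Measurable fun b => u b s j) (t : ℕ) (j : Fin N) :
    Measurable fun b => dpfUnnormPi N L pobs ptrans g (u b) t j := by
  induction t generalizing j with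
  | zero => exact measurable_const
  | succ t ih =>
    simp only [dpfUnnormPi, dpfStepW, Nat.add_sub_cancel]
    refine (Finset.measurable_sum _ fun l _ => ?_).const_mul _
    exact (((ih _).mul ((hpobs _).comp (hu _ _))).mul
      ((hptrans _).comp ((hu _ _).prodMk (hu _ _)))).div ((hg _).comp (hu _ _))

theorem ofReal_dpfStepW (hL : L ≠ 0) (hpobs0 : ∀ t x, 0 ≤ pobs t x)
    (hptrans0 : ∀ t x x', 0 ≤ ptrans t x x') {u : ℕ → Fin N → ℝ} {t : ℕ} {π : Fin N → ℝ}
    (hπ : 0 ≤ π) {j : Fin N} (hg : 0 < g t (u t j)) :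
    ENNReal.ofReal (dpfStepW N L pobs ptrans g u t π j)
      = (L : ℝ≥0∞)⁻¹ * ∑ l ∈ range L, ENNReal.ofReal (π (j + l)) *
          (ENNReal.ofReal (pobs t (u t j)) * ENNReal.ofReal (ptrans t (u (t - 1) (j + l)) (u t j)))
            / ENNReal.ofReal (g t (u t j)) := by
  have hterm : ∀ l : ℕ, 0 ≤ π (j + l) * pobs t (u t j) * ptrans t (u (t - 1) (j + l)) (u t j) :=
    fun l => mul_nonneg (mul_nonneg (hπ _) (hpobs0 _ _)) (hptrans0 _ _ _)
  rw [dpfStepW, ENNReal.ofReal_mul (by positivity), ENNReal.ofReal_inv_of_pos (by positivity),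
    ENNReal.ofReal_natCast, ENNReal.ofReal_sum_of_nonneg fun l _ => div_nonneg (hterm l) hg.le]
  refine congrArg _ (sum_congr rfl fun l _ => ?_)
  rw [ENNReal.ofReal_div_of_pos hg, ENNReal.ofReal_mul (mul_nonneg (hπ _) (hpobs0 _ _)),
    ENNReal.ofReal_mul (hπ _), mul_assoc]

end Weights

section HMM

variable {N : ℕ} {p0 : ℝ → ℝ} {pobs : ℕ → ℝ → ℝ} {ptrans : ℕ → ℝ → ℝ → ℝ} {g : ℕ → ℝ → ℝ}

variable (pobs ptrans) in
noncomputable def weightedTransition (t : ℕ) (φ : ℝ → ℝ≥0∞) (x : ℝ) : ℝ≥0∞ :=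
  ∫⁻ x', ENNReal.ofReal (pobs t x') * ENNReal.ofReal (ptrans t x x') * φ x'

variable (p0 pobs ptrans) in
/-- The unnormalised filter `∫ p(x_0) ∏_{s=1}^t p(y_s|x_s) p(x_s|x_{s-1}) φ(x_t) dx_{0:t}`,
with the innermost integral taken over the last state. -/
noncomputable def unnormFilter : ℕ → (ℝ → ℝ≥0∞) → ℝ≥0∞
  | 0, φ => ∫⁻ x, ENNReal.ofReal (p0 x) * φ x
  | t + 1, φ => unnormFilter t (weightedTransition pobs ptrans (t + 1) φ)

variable (p0 g) in
noncomputable def samplingDensity : ℕ → ℝ → ℝ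
  | 0 => p0
  | t + 1 => g (t + 1)

theorem samplingDensity_of_ne_zero {t : ℕ} (ht : t ≠ 0) : samplingDensity p0 g t = g t := by
  cases t with
  | zero => exact absurd rfl ht
  | succ t => rfl

theorem measurable_samplingDensity (hp0 : Measurable p0) (hg : ∀ t, Measurable (g t)) :
    ∀ t, Measurable (samplingDensity p0 g t)
  | 0 => hp0
  | t + 1 => hg (t + 1)

theorem samplingDensity_nonneg (hp00 : ∀ x, 0 ≤ p0 x) (hg0 : ∀ t x, 0 ≤ g t x) :
    ∀ t x, 0 ≤ samplingDensity p0 g t x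
  | 0 => hp00
  | t + 1 => hg0 (t + 1)

theorem prod_samplingDensity {T : ℕ} (v : Fin (T + 1) → Fin N → ℝ) :
    ∏ s : Fin (T + 1), ∏ j, samplingDensity p0 g s (v s j)
      = (∏ j, p0 (v 0 j)) * ∏ t ∈ Icc 1 T, ∏ j, g t (v t j) := by
  have h := prod_fin_succ_eq_mul_prod_Icc T fun t => ∏ j, samplingDensity p0 g t (v t j)
  simp only [Fin.cast_val_eq_self] at h
  have hrest : ∏ t ∈ Icc 1 T, ∏ j, samplingDensity p0 g t (v t j)
      = ∏ t ∈ Icc 1 T, ∏ j, g t (v t j) := prod_congr rfl fun t ht => by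
    rw [samplingDensity_of_ne_zero (by rw [mem_Icc] at ht; omega)]
  rw [h, hrest, Nat.cast_zero]
  rfl

theorem measurable_weightedTransition (hpobs : ∀ t, Measurable (pobs t))
    (hptrans : ∀ t, Measurable fun q : ℝ × ℝ => ptrans t q.1 q.2) (t : ℕ) {φ : ℝ → ℝ≥0∞}
    (hφ : Measurable φ) : Measurable (weightedTransition pobs ptrans t φ) := by
  exact Measurable.lintegral_prod_right <|
    (((hpobs t).comp measurable_snd).ennreal_ofReal.mul (hptrans t).ennreal_ofReal).mul
      (hφ.comp measurable_snd)

variable (p0 g) in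
noncomputable def particleDensity {T : ℕ} (v : Fin (T + 1) → Fin N → ℝ) : ℝ≥0∞ :=
  ∏ s : Fin (T + 1), ∏ j, ENNReal.ofReal (samplingDensity p0 g s (v s j))

theorem particleDensity_snoc {T : ℕ} (w : Fin (T + 1) → Fin N → ℝ) (a : Fin N → ℝ) :
    particleDensity p0 g (Fin.snoc w a : Fin (T + 2) → Fin N → ℝ)
      = particleDensity p0 g w * ∏ j, ENNReal.ofReal (g (T + 1) (a j)) := by
  simp only [particleDensity, Fin.prod_univ_castSucc, Fin.snoc_castSucc, Fin.snoc_last,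
    Fin.val_castSucc, Fin.val_last, samplingDensity]

end HMM

section Unbiased

variable {N L : ℕ} [NeZero N] {p0 : ℝ → ℝ} {pobs : ℕ → ℝ → ℝ} {ptrans : ℕ → ℝ → ℝ → ℝ}
  {g : ℕ → ℝ → ℝ}

theorem lintegral_snoc_sum_dpfUnnormPi (hL : L ≠ 0) (hpobs : ∀ t, Measurable (pobs t))
    (hpobs0 : ∀ t x, 0 ≤ pobs t x) (hptrans : ∀ t, Measurable fun q : ℝ × ℝ => ptrans t q.1 q.2)
    (hptrans0 : ∀ t x x', 0 ≤ ptrans t x x') (hg : ∀ t, Measurable (g t))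
    (hgpos : ∀ t x, 0 < g t x) (hgdens : ∀ t, ∫⁻ x, ENNReal.ofReal (g t x) = 1) {T : ℕ}
    {φ : ℝ → ℝ≥0∞} (hφ : Measurable φ) (w : Fin (T + 1) → Fin N → ℝ) :
    ∫⁻ a : Fin N → ℝ,
      (∑ j, ENNReal.ofReal (dpfUnnormPi N L pobs ptrans g
          (fun s : ℕ => (Fin.snoc w a : Fin (T + 2) → Fin N → ℝ) s) (T + 1) j) * φ (a j)) *
        particleDensity p0 g (Fin.snoc w a : Fin (T + 2) → Fin N → ℝ)
      = (∑ j, ENNReal.ofReal (dpfUnnormPi N L pobs ptrans g (fun s : ℕ => w s) T j)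
          * weightedTransition pobs ptrans (T + 1) φ (w (Fin.last T) j)) *
        particleDensity p0 g w := by
  set G : ℝ → ℝ≥0∞ := fun z => ENNReal.ofReal (g (T + 1) z)
  set c : Fin N → ℝ≥0∞ := fun i =>
    ENNReal.ofReal (dpfUnnormPi N L pobs ptrans g (fun s : ℕ => w s) T i)
  set K : Fin N → ℝ → ℝ≥0∞ := fun i z =>
    ENNReal.ofReal (pobs (T + 1) z) * ENNReal.ofReal (ptrans (T + 1) (w (Fin.last T) i) z)
  have hweight : ∀ a : Fin N → ℝ, ∀ j, ENNReal.ofReal (dpfUnnormPi N L pobs ptrans g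
      (fun s : ℕ => (Fin.snoc w a : Fin (T + 2) → Fin N → ℝ) s) (T + 1) j)
      = (L : ℝ≥0∞)⁻¹ * ∑ l ∈ range L, c (j + l) * K (j + l) (a j) / G (a j) := fun a j => by
    set u := fun s : ℕ => (Fin.snoc w a : Fin (T + 2) → Fin N → ℝ) s
    have hprefix : ∀ s ≤ T, u s = w s := fun s hs => Fin.snoc_natCast_of_le w a hs
    have hnew : u (T + 1) = a := by
      change (Fin.snoc w a : Fin (T + 2) → Fin N → ℝ) ((T + 1 : ℕ) : Fin (T + 2)) = a
      rw [Fin.natCast_eq_last, Fin.snoc_last]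
    change ENNReal.ofReal (dpfStepW N L pobs ptrans g u (T + 1)
      (dpfUnnormPi N L pobs ptrans g u T) j) = _
    rw [ofReal_dpfStepW hL hpobs0 hptrans0 (dpfUnnormPi_nonneg hpobs0 hptrans0
      (fun t x => (hgpos t x).le) u T) (hgpos _ _), dpfUnnormPi_congr hprefix,
      Nat.add_sub_cancel, hnew, hprefix T le_rfl, Fin.natCast_eq_last]
  have hG : Measurable G := (hg (T + 1)).ennreal_ofReal
  have hK : ∀ i, Measurable (K i) := fun i =>
    (hpobs _).ennreal_ofReal.mul ((hptrans _).comp measurable_prodMk_left).ennreal_ofReal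
  have hintegrand : ∀ a : Fin N → ℝ,
      (∑ j, ENNReal.ofReal (dpfUnnormPi N L pobs ptrans g
          (fun s : ℕ => (Fin.snoc w a : Fin (T + 2) → Fin N → ℝ) s) (T + 1) j) * φ (a j)) *
        particleDensity p0 g (Fin.snoc w a : Fin (T + 2) → Fin N → ℝ)
      = ((∑ j, ((L : ℝ≥0∞)⁻¹ * ∑ l ∈ range L, c (j + l) * K (j + l) (a j) / G (a j)) * φ (a j))
          * ∏ i, G (a i)) * particleDensity p0 g w := fun a => by
    simp only [hweight a, particleDensity_snoc]
    ring
  rw [lintegral_congr hintegrand, lintegral_mul_const _ (by fun_prop), volume_pi,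
    lintegral_pi_cyclic_importance_sum hG (hgdens (T + 1)) (fun z => (ENNReal.ofReal_pos.mpr
      (hgpos _ z)).ne') (fun z => ENNReal.ofReal_ne_top) hL (fun l : ℕ => (l : Fin N)) c hK hφ]
  rfl

theorem lintegral_sum_dpfUnnormPi_mul_density (hL : L ≠ 0) (hp0 : Measurable p0)
    (hp0dens : ∫⁻ x, ENNReal.ofReal (p0 x) = 1) (hpobs : ∀ t, Measurable (pobs t))
    (hpobs0 : ∀ t x, 0 ≤ pobs t x) (hptrans : ∀ t, Measurable fun q : ℝ × ℝ => ptrans t q.1 q.2)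
    (hptrans0 : ∀ t x x', 0 ≤ ptrans t x x') (hg : ∀ t, Measurable (g t))
    (hgpos : ∀ t x, 0 < g t x) (hgdens : ∀ t, ∫⁻ x, ENNReal.ofReal (g t x) = 1) (T : ℕ)
    {φ : ℝ → ℝ≥0∞} (hφ : Measurable φ) :
    ∫⁻ v : Fin (T + 1) → Fin N → ℝ,
      (∑ j, ENNReal.ofReal (dpfUnnormPi N L pobs ptrans g (fun s : ℕ => v s) T j)
          * φ (v (Fin.last T) j)) *
        particleDensity p0 g v
      = unnormFilter p0 pobs ptrans T φ := by
  induction T generalizing φ with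
  | zero =>
    have hN : ENNReal.ofReal (N : ℝ)⁻¹ * N = 1 := by
      rw [ENNReal.ofReal_inv_of_pos (Nat.cast_pos.mpr (NeZero.pos N)), ENNReal.ofReal_natCast,
        ENNReal.inv_mul_cancel (by exact_mod_cast NeZero.ne N) (ENNReal.natCast_ne_top N)]
    have hunique := (measurePreserving_funUnique (volume : Measure (Fin N → ℝ)) (Fin 1))
      |>.lintegral_comp_emb (MeasurableEquiv.measurableEmbedding _) fun y =>
        ENNReal.ofReal (N : ℝ)⁻¹ * ((∑ j, φ (y j)) * ∏ k, ENNReal.ofReal (p0 (y k)))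
    simp only [particleDensity, Fin.prod_univ_succ, Fin.prod_univ_zero, mul_one, samplingDensity,
      dpfUnnormPi, ← mul_sum, mul_assoc]
    refine hunique.trans ?_
    rw [lintegral_const_mul _ (by fun_prop), volume_pi,
      lintegral_pi_sum_mul_prod_of_lintegral_eq_one hφ hp0.ennreal_ofReal hp0dens,
      Fintype.card_fin, ← mul_assoc, hN, one_mul, unnormFilter]
    exact lintegral_congr fun x => mul_comm _ _
  | succ T ih =>
    have hq := measurable_samplingDensity hp0 hg
    have hS := measurable_dpfUnnormPi (L := L) hpobs hptrans hg
      (u := fun (v : Fin (T + 2) → Fin N → ℝ) (s : ℕ) => v s) (fun s j => by fun_prop) (T + 1)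
    have hmeas : Measurable fun v : Fin (T + 2) → Fin N → ℝ =>
        (∑ j, ENNReal.ofReal (dpfUnnormPi N L pobs ptrans g (fun s : ℕ => v s) (T + 1) j)
          * φ (v (Fin.last (T + 1)) j)) * particleDensity p0 g v := by
      unfold particleDensity
      fun_prop
    rw [volume_pi, lintegral_pi_fin_succ _ hmeas]
    refine (lintegral_congr fun w => ?_).trans
      (ih (measurable_weightedTransition hpobs hptrans (T + 1) hφ))
    simp only [Fin.snoc_last]
    exact lintegral_snoc_sum_dpfUnnormPi hL hpobs hpobs0 hptrans hptrans0 hg hgpos hgdens hφ w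

theorem integral_dpfLikeEst_mul_density (hL : L ≠ 0) (hp0 : Measurable p0) (hp00 : ∀ x, 0 ≤ p0 x)
    (hp0dens : ∫⁻ x, ENNReal.ofReal (p0 x) = 1) (hpobs : ∀ t, Measurable (pobs t))
    (hpobs0 : ∀ t x, 0 ≤ pobs t x) (hptrans : ∀ t, Measurable fun q : ℝ × ℝ => ptrans t q.1 q.2)
    (hptrans0 : ∀ t x x', 0 ≤ ptrans t x x') (hg : ∀ t, Measurable (g t))
    (hgpos : ∀ t x, 0 < g t x) (hgdens : ∀ t, ∫⁻ x, ENNReal.ofReal (g t x) = 1) (T : ℕ) :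
    ∫ v : Fin (T + 1) → Fin N → ℝ,
        dpfLikeEst N L pobs ptrans g T (fun t => v (t : Fin (T + 1))) *
          ((∏ j : Fin N, p0 (v 0 j)) *
            ∏ t ∈ Finset.Icc 1 T, ∏ j : Fin N, g t (v (t : Fin (T + 1)) j))
      = (unnormFilter p0 pobs ptrans T 1).toReal := by
  have hg0 : ∀ t x, 0 ≤ g t x := fun t x => (hgpos t x).le
  have hq0 := samplingDensity_nonneg hp00 hg0
  have hq := measurable_samplingDensity hp0 hg
  have hS := measurable_dpfUnnormPi (L := L) hpobs hptrans hg
    (u := fun (v : Fin (T + 1) → Fin N → ℝ) (s : ℕ) => v s) (fun s j => by fun_prop) T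
  have hS0 : ∀ v : Fin (T + 1) → Fin N → ℝ,
      0 ≤ ∑ j, dpfUnnormPi N L pobs ptrans g (fun s : ℕ => v s) T j :=
    fun v => sum_nonneg fun j _ => dpfUnnormPi_nonneg hpobs0 hptrans0 hg0 _ T j
  have hD0 : ∀ (v : Fin (T + 1) → Fin N → ℝ) (s : Fin (T + 1)),
      0 ≤ ∏ j, samplingDensity p0 g s (v s j) :=
    fun v s => prod_nonneg fun j _ => hq0 _ _
  simp_rw [dpfLikeEst_eq_sum_dpfUnnormPi hpobs0 hptrans0 hg0, ← prod_samplingDensity]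
  rw [integral_eq_lintegral_of_nonneg_ae (ae_of_all _ fun v => mul_nonneg (hS0 v)
      (prod_nonneg fun s _ => hD0 v s)) (by fun_prop : Measurable _).aestronglyMeasurable,
    ← lintegral_sum_dpfUnnormPi_mul_density (N := N) hL hp0 hp0dens hpobs hpobs0 hptrans
      hptrans0 hg hgpos hgdens T (φ := 1) measurable_one]
  refine congrArg _ (lintegral_congr fun v => ?_)
  rw [ENNReal.ofReal_mul (hS0 v), ENNReal.ofReal_sum_of_nonneg fun j _ =>
      dpfUnnormPi_nonneg hpobs0 hptrans0 hg0 _ T j,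
    ENNReal.ofReal_prod_of_nonneg fun s _ => hD0 v s, particleDensity]
  simp only [Pi.one_apply, mul_one, ENNReal.ofReal_prod_of_nonneg fun j _ => hq0 _ _]

end Unbiased

section SingleParticle

variable {p0 : ℝ → ℝ} {pobs : ℕ → ℝ → ℝ} {ptrans : ℕ → ℝ → ℝ → ℝ} {g : ℕ → ℝ → ℝ}

theorem dpfUnnormPi_one_one (u : ℕ → Fin 1 → ℝ) (t : ℕ) :
    dpfUnnormPi 1 1 pobs ptrans g u t 0
      = ∏ s ∈ Icc 1 t, pobs s (u s 0) * ptrans s (u (s - 1) 0) (u s 0) / g s (u s 0) := by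
  induction t with
  | zero => simp [dpfUnnormPi]
  | succ t ih =>
    rw [prod_Icc_succ_top (by omega), ← ih]
    simp only [dpfUnnormPi, dpfStepW, Nat.cast_one, inv_one, one_mul, range_one, sum_singleton,
      Nat.cast_zero, add_zero]
    ring

theorem dpfLikeEst_one_one (hpobs0 : ∀ t x, 0 ≤ pobs t x)
    (hptrans0 : ∀ t x x', 0 ≤ ptrans t x x') (hg0 : ∀ t x, 0 ≤ g t x) (T : ℕ)
    (u : ℕ → Fin 1 → ℝ) :
    dpfLikeEst 1 1 pobs ptrans g T u
      = ∏ t ∈ Icc 1 T, pobs t (u t 0) * ptrans t (u (t - 1) 0) (u t 0) / g t (u t 0) := by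
  rw [dpfLikeEst_eq_sum_dpfUnnormPi hpobs0 hptrans0 hg0, Fin.sum_univ_one, dpfUnnormPi_one_one]

theorem integral_path_eq_integral_dpfLikeEst_one_one (hpobs0 : ∀ t x, 0 ≤ pobs t x)
    (hptrans0 : ∀ t x x', 0 ≤ ptrans t x x') (hgpos : ∀ t x, 0 < g t x) (T : ℕ) :
    ∫ x : Fin (T + 1) → ℝ,
        p0 (x 0) * ∏ t ∈ Finset.Icc 1 T,
          pobs t (x (t : Fin (T + 1))) *
            ptrans t (x ((t - 1 : ℕ) : Fin (T + 1))) (x (t : Fin (T + 1)))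
      = ∫ v : Fin (T + 1) → Fin 1 → ℝ,
          dpfLikeEst 1 1 pobs ptrans g T (fun t => v (t : Fin (T + 1))) *
            ((∏ j : Fin 1, p0 (v 0 j)) *
              ∏ t ∈ Finset.Icc 1 T, ∏ j : Fin 1, g t (v (t : Fin (T + 1)) j)) := by
  have hmp : MeasurePreserving
      (MeasurableEquiv.piCongrRight fun _ : Fin (T + 1) => MeasurableEquiv.funUnique (Fin 1) ℝ) :=
    volume_preserving_pi fun _ => volume_preserving_funUnique (Fin 1) ℝ
  rw [← hmp.integral_comp']
  refine integral_congr_ae (ae_of_all _ fun v => ?_)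
  have hG : ∏ t ∈ Icc 1 T, g t (v (t : Fin (T + 1)) 0) ≠ 0 :=
    prod_ne_zero_iff.mpr fun t _ => (hgpos _ _).ne'
  change p0 (v 0 0) * ∏ t ∈ Icc 1 T, pobs t (v t 0) * ptrans t (v (t - 1 : ℕ) 0) (v t 0)
    = dpfLikeEst 1 1 pobs ptrans g T (fun t => v t) *
      ((∏ j : Fin 1, p0 (v 0 j)) * ∏ t ∈ Icc 1 T, ∏ j : Fin 1, g t (v t j))
  rw [dpfLikeEst_one_one hpobs0 hptrans0 (fun t x => (hgpos t x).le), prod_div_distrib]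
  simp only [Fin.prod_univ_one]
  field_simp

end SingleParticle

theorem dpf_likelihood_unbiased_general
    (N L T : ℕ) [NeZero N] (hL1 : 1 ≤ L)
    (p0 : ℝ → ℝ) (pobs : ℕ → ℝ → ℝ) (ptrans : ℕ → ℝ → ℝ → ℝ) (g : ℕ → ℝ → ℝ)
    (hp0 : Measurable p0) (hp00 : ∀ x, 0 ≤ p0 x) (hp0dens : ∫ x, p0 x = 1)
    (hpobs : ∀ t, Measurable (pobs t)) (hpobs0 : ∀ t x, 0 ≤ pobs t x)
    (hptrans : ∀ t, Measurable fun q : ℝ × ℝ => ptrans t q.1 q.2)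
    (hptrans0 : ∀ t x x', 0 ≤ ptrans t x x')
    (hg : ∀ t, Measurable (g t)) (hgpos : ∀ t x, 0 < g t x)
    (hgdens : ∀ t, ∫ x, g t x = 1) :
    ∫ v : Fin (T + 1) → Fin N → ℝ,
        dpfLikeEst N L pobs ptrans g T (fun t => v (t : Fin (T + 1))) *
          ((∏ j : Fin N, p0 (v 0 j)) *
            ∏ t ∈ Finset.Icc 1 T, ∏ j : Fin N, g t (v (t : Fin (T + 1)) j))
      = ∫ x : Fin (T + 1) → ℝ,
          p0 (x 0) * ∏ t ∈ Finset.Icc 1 T,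
            pobs t (x (t : Fin (T + 1))) *
              ptrans t (x ((t - 1 : ℕ) : Fin (T + 1))) (x (t : Fin (T + 1))) := by
  have hp0dens' := lintegral_ofReal_eq_one hp00 hp0dens
  have hgdens' := fun t => lintegral_ofReal_eq_one (fun x => (hgpos t x).le) (hgdens t)
  rw [integral_path_eq_integral_dpfLikeEst_one_one hpobs0 hptrans0 hgpos,
    integral_dpfLikeEst_mul_density (by omega) hp0 hp00 hp0dens' hpobs hpobs0 hptrans hptrans0 hg
      hgpos hgdens',
    integral_dpfLikeEst_mul_density one_ne_zero hp0 hp00 hp0dens' hpobs hpobs0 hptrans hptrans0 hg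
      hgpos hgdens']

/-- Theorem 1: unbiasedness of the DPF likelihood estimator with `L`
cyclic-permutation matching, `1 ≤ L ≤ N`.  The initial particles are i.i.d.
draws from `p0`, and at each step `t` the new particles are i.i.d. draws from
the positive proposal density `g t`; the joint law of the particle array is
hence the product measure with density
`(∏_j p0(u_{0,j})) ∏_{t=1}^T ∏_j g_t(u_{t,j})`.  The expectation of
`p̂(y_{1:T})` equals `p(y_{1:T}) = ∫⋯∫ p(x_0) ∏_t p(y_t|x_t) p(x_t|x_{t-1}) dx_{0:T}`. -/
theorem dpf_likelihood_unbiased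
    (N L T : ℕ) [NeZero N] (hL1 : 1 ≤ L) (hLN : L ≤ N) (hT : 1 ≤ T)
    (p0 : ℝ → ℝ) (pobs : ℕ → ℝ → ℝ) (ptrans : ℕ → ℝ → ℝ → ℝ) (g : ℕ → ℝ → ℝ)
    (hp0 : Measurable p0) (hp00 : ∀ x, 0 ≤ p0 x) (hp0dens : ∫ x, p0 x = 1)
    (hpobs : ∀ t, Measurable (pobs t)) (hpobs0 : ∀ t x, 0 ≤ pobs t x)
    (hptrans : ∀ t, Measurable fun q : ℝ × ℝ => ptrans t q.1 q.2)
    (hptrans0 : ∀ t x x', 0 ≤ ptrans t x x')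
    (hptransdens : ∀ t x', ∫ x, ptrans t x' x = 1)
    (hg : ∀ t, Measurable (g t)) (hgpos : ∀ t x, 0 < g t x)
    (hgdens : ∀ t, ∫ x, g t x = 1)
    (hint : Integrable
        (fun v : Fin (T + 1) → Fin N → ℝ =>
          dpfLikeEst N L pobs ptrans g T (fun t => v (t : Fin (T + 1))) *
            ((∏ j : Fin N, p0 (v 0 j)) *
              ∏ t ∈ Finset.Icc 1 T, ∏ j : Fin N, g t (v (t : Fin (T + 1)) j)))
        volume)
    (hintRHS : Integrable
        (fun x : Fin (T + 1) → ℝ =>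
          p0 (x 0) * ∏ t ∈ Finset.Icc 1 T,
            pobs t (x (t : Fin (T + 1))) *
              ptrans t (x ((t - 1 : ℕ) : Fin (T + 1))) (x (t : Fin (T + 1))))
        volume) :
    ∫ v : Fin (T + 1) → Fin N → ℝ,
        dpfLikeEst N L pobs ptrans g T (fun t => v (t : Fin (T + 1))) *
          ((∏ j : Fin N, p0 (v 0 j)) *
            ∏ t ∈ Finset.Icc 1 T, ∏ j : Fin N, g t (v (t : Fin (T + 1)) j))
      = ∫ x : Fin (T + 1) → ℝ,
          p0 (x 0) * ∏ t ∈ Finset.Icc 1 T,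
            pobs t (x (t : Fin (T + 1))) *
              ptrans t (x ((t - 1 : ℕ) : Fin (T + 1))) (x (t : Fin (T + 1))) :=
  dpf_likelihood_unbiased_general N L T hL1 p0 pobs ptrans g hp0 hp00 hp0dens hpobs hpobs0 hptrans
    hptrans0 hg hgpos hgdens
end

section
/- Take T = 1 in the previous setting: draw x_0^{[j]} i.i.d. from p(x_0), then x_1^{[j]} i.i.d. from a positive proposal g, and set w_1^{[j]} = (1/N) p(y_1|x_1^{[j]}) · (1/L)∑_{l=1}^L p(x_1^{[j]}|x_0^{[k_{l,j}]}) / g(x_1^{[j]}). Then E[∑_{j=1}^N w_1^{[j]}] = ∫∫ p(y_1|x_1) p(x_1|x_0) p(x_0) dx_1 dx_0 = p(y_1). (One-step unbiasedness of the DPF with multiple matching.) -/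
open MeasureTheory Finset
open Fin.NatCast
open scoped ENNReal

/-! Expanding the double sum writes the integrand as `(N L)⁻¹ ∏ p0(a i) ∏ g(b i)` times a sum of
`N L` terms, each depending on a single initial particle `a (j + l)` and a single new particle
`b j`. Integrating out the remaining coordinates against the probability densities `p0` and `g`
(Tonelli, in `ℝ≥0∞`) leaves `N L` copies of `∫∫ p0 x0 g x1 (pobs x1 ptrans x0 x1 / g x1)`, and the
normalisation cancels the count. The proposal then cancels against the division; where
`g x1 = 0` the positivity hypothesis forces `∫ pobs x1 ptrans x0 x1 p0 x0 dx0 = 0`, and this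
integral is a genuine one for a.e. `x1` by integrability of the target. -/

section

variable {α : Type*} [MeasurableSpace α]

theorem lintegral_fin_nat_prod_eq_prod {n : ℕ} {μ : Fin n → Measure α} [∀ i, SigmaFinite (μ i)]
    (f : Fin n → α → ℝ≥0∞) (hf : ∀ i, Measurable (f i)) :
    ∫⁻ x, ∏ i, f i (x i) ∂Measure.pi μ = ∏ i, ∫⁻ x, f i x ∂μ i := by
  induction n with
  | zero => simp
  | succ n ih =>
    have hprod : Measurable fun y : Fin n → α => ∏ i : Fin n, f i.succ (y i) := by fun_prop
    calc ∫⁻ x, ∏ i, f i (x i) ∂Measure.pi μ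
        = ∫⁻ x : α × (Fin n → α), f 0 x.1 * ∏ i : Fin n, f i.succ (x.2 i)
            ∂(μ 0).prod (Measure.pi fun i => μ i.succ) := by
          rw [← (measurePreserving_piFinSuccAbove μ 0).symm.lintegral_comp (by fun_prop)]
          simp_rw [Fin.prod_univ_succ]
          rfl
      _ = ∏ i, ∫⁻ x, f i x ∂μ i := by
          rw [lintegral_prod_mul (hf 0).aemeasurable hprod.aemeasurable, ih _ fun i => hf i.succ,
            Fin.prod_univ_succ]

theorem lintegral_fintype_prod_eq_prod {ι : Type*} [Fintype ι] {μ : ι → Measure α}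
    [∀ i, SigmaFinite (μ i)] (f : ι → α → ℝ≥0∞) (hf : ∀ i, Measurable (f i)) :
    ∫⁻ x, ∏ i, f i (x i) ∂Measure.pi μ = ∏ i, ∫⁻ x, f i x ∂μ i := by
  let e := (Fintype.equivFin ι).symm
  rw [← (measurePreserving_piCongrLeft μ e).lintegral_comp (by fun_prop)]
  simp_rw [← e.prod_comp, MeasurableEquiv.coe_piCongrLeft, Equiv.piCongrLeft_apply_apply]
  exact lintegral_fin_nat_prod_eq_prod _ fun i => hf (e i)

end

section

variable {α β ι ι' κ : Type*} [MeasurableSpace α] [MeasurableSpace β] {μ : Measure α}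
  {ν : Measure β} [Fintype ι] [Fintype ι']

theorem lintegral_pi_prod_mul_apply [SigmaFinite μ] {d h : α → ℝ≥0∞} (hd : Measurable d)
    (hh : Measurable h) (hd1 : ∫⁻ x, d x ∂μ = 1) (i₀ : ι) :
    ∫⁻ x, (∏ i, d (x i)) * h (x i₀) ∂Measure.pi (fun _ => μ) = ∫⁻ x, d x * h x ∂μ := by
  classical
  have hsplit : ∀ x : ι → α,
      (∏ i, d (x i)) * h (x i₀) = ∏ i, d (x i) * if i₀ = i then h (x i) else 1 := fun x => by
    rw [prod_mul_distrib, prod_ite_eq, if_pos (mem_univ _)]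
  have hfactor : ∀ i, ∫⁻ y, d y * (if i₀ = i then h y else 1) ∂μ =
      if i₀ = i then ∫⁻ y, d y * h y ∂μ else 1 := fun i => by
    split_ifs <;> simp [hd1]
  simp_rw [hsplit]
  rw [lintegral_fintype_prod_eq_prod (fun i y => d y * if i₀ = i then h y else 1)
    fun i => by split_ifs <;> fun_prop]
  simp_rw [hfactor, prod_ite_eq, if_pos (mem_univ _)]

theorem lintegral_pi_lintegral_pi_prod_mul_sum [SigmaFinite μ] [SigmaFinite ν]
    {P : α → ℝ≥0∞} {D : β → ℝ≥0∞} (hP : Measurable P) (hD : Measurable D)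
    (hP1 : ∫⁻ x, P x ∂μ = 1) (hD1 : ∫⁻ y, D y ∂ν = 1) {K : α → β → ℝ≥0∞}
    (hK : Measurable (Function.uncurry K)) (s : Finset κ) (k : κ → ι) (j : κ → ι') :
    ∫⁻ a, ∫⁻ b, (∏ i, P (a i)) * (∏ i, D (b i)) * ∑ m ∈ s, K (a (k m)) (b (j m))
        ∂Measure.pi (fun _ => ν) ∂Measure.pi (fun _ => μ)
      = #s * ∫⁻ x, ∫⁻ y, P x * D y * K x y ∂ν ∂μ := by
  have hK' : ∀ x, Measurable (K x) := fun x => hK.comp measurable_prodMk_left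
  have hJ : Measurable fun x => ∫⁻ y, D y * K x y ∂ν :=
    ((hD.comp measurable_snd).mul hK).lintegral_prod_right'
  have hterm : ∀ m, ∫⁻ a, ∫⁻ b, (∏ i, P (a i)) * (∏ i, D (b i)) * K (a (k m)) (b (j m))
      ∂Measure.pi (fun _ => ν) ∂Measure.pi (fun _ => μ)
        = ∫⁻ x, ∫⁻ y, P x * D y * K x y ∂ν ∂μ := fun m => by
    have hmeas : ∀ x, Measurable fun b : ι' → β => (∏ i, D (b i)) * K x (b (j m)) := fun x => by
      have := hK' x
      fun_prop
    simp_rw [mul_assoc, lintegral_const_mul _ (hmeas _),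
      lintegral_pi_prod_mul_apply hD (hK' _) hD1, lintegral_pi_prod_mul_apply hP hJ hP1]
    exact lintegral_congr fun x => (lintegral_const_mul _ (hD.mul (hK' x))).symm
  have hmeas : ∀ m, Measurable fun q : (ι → α) × (ι' → β) =>
      (∏ i, P (q.1 i)) * (∏ i, D (q.2 i)) * K (q.1 (k m)) (q.2 (j m)) := fun m => by fun_prop
  calc ∫⁻ a, ∫⁻ b, (∏ i, P (a i)) * (∏ i, D (b i)) * ∑ m ∈ s, K (a (k m)) (b (j m))
        ∂Measure.pi (fun _ => ν) ∂Measure.pi (fun _ => μ)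
      = ∑ m ∈ s, ∫⁻ a, ∫⁻ b, (∏ i, P (a i)) * (∏ i, D (b i)) * K (a (k m)) (b (j m))
        ∂Measure.pi (fun _ => ν) ∂Measure.pi (fun _ => μ) := by
        simp_rw [mul_sum]
        rw [← lintegral_finsetSum _ fun m _ => (hmeas m).lintegral_prod_right']
        exact lintegral_congr fun a =>
          lintegral_finsetSum _ fun m _ => (hmeas m).comp measurable_prodMk_left
    _ = #s * ∫⁻ x, ∫⁻ y, P x * D y * K x y ∂ν ∂μ := by
        rw [sum_congr rfl fun m _ => hterm m, sum_const, nsmul_eq_mul]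

theorem lintegral_ofReal_eq_one_of_integral_eq_one {p : α → ℝ} (hp0 : ∀ x, 0 ≤ p x)
    (hp1 : ∫ x, p x ∂μ = 1) : ∫⁻ x, ENNReal.ofReal (p x) ∂μ = 1 := by
  have hint : Integrable p μ := by
    by_contra h
    simp [integral_undef h] at hp1
  rw [← ofReal_integral_eq_lintegral_ofReal hint (ae_of_all _ hp0), hp1, ENNReal.ofReal_one]

theorem integral_integral_eq_toReal_lintegral_lintegral [SFinite ν] {F : α → β → ℝ}
    (hF : Measurable (Function.uncurry F)) (hF0 : ∀ x y, 0 ≤ F x y)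
    (hfin : ∫⁻ x, ∫⁻ y, ENNReal.ofReal (F x y) ∂ν ∂μ ≠ ∞) :
    ∫ x, ∫ y, F x y ∂ν ∂μ = (∫⁻ x, ∫⁻ y, ENNReal.ofReal (F x y) ∂ν ∂μ).toReal := by
  have hinner : Measurable fun x => ∫⁻ y, ENNReal.ofReal (F x y) ∂ν :=
    hF.ennreal_ofReal.lintegral_prod_right'
  rw [← integral_toReal hinner.aemeasurable (ae_lt_top hinner hfin)]
  exact integral_congr_ae <| ae_of_all _ fun x => integral_eq_lintegral_of_nonneg_ae
    (ae_of_all _ (hF0 x)) (hF.comp measurable_prodMk_left).aestronglyMeasurable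

theorem lintegral_lintegral_ofReal_mul_div [SFinite μ] [SFinite ν] {f : α → β → ℝ}
    {c : β → ℝ} (hf : Measurable (Function.uncurry f)) (hc : Measurable c) (hc0 : ∀ y, 0 ≤ c y)
    (hsupp : ∀ᵐ y ∂ν, c y = 0 → ∫⁻ x, ENNReal.ofReal (f x y) ∂μ = 0) :
    ∫⁻ x, ∫⁻ y, ENNReal.ofReal (c y * (f x y / c y)) ∂ν ∂μ
      = ∫⁻ x, ∫⁻ y, ENNReal.ofReal (f x y) ∂ν ∂μ := by
  rw [lintegral_lintegral_swap (f := fun x y => ENNReal.ofReal (c y * (f x y / c y)))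
      (by fun_prop),
    lintegral_lintegral_swap (f := fun x y => ENNReal.ofReal (f x y)) (by fun_prop)]
  refine lintegral_congr_ae ?_
  filter_upwards [hsupp] with y hy
  rcases (hc0 y).eq_or_lt with hzero | hpos
  · simp [← hzero, hy hzero.symm]
  · simp_rw [mul_div_cancel₀ _ hpos.ne']

theorem integral_pi_integral_pi_prod_mul_sum [SigmaFinite μ] [SigmaFinite ν] {p : α → ℝ}
    {q : β → ℝ} (hp : Measurable p) (hq : Measurable q) (hp0 : ∀ x, 0 ≤ p x)
    (hq0 : ∀ y, 0 ≤ q y) (hp1 : ∫ x, p x ∂μ = 1) (hq1 : ∫ y, q y ∂ν = 1) {W : α → β → ℝ}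
    (hW : Measurable (Function.uncurry W)) (hW0 : ∀ x y, 0 ≤ W x y)
    (hfin : ∫⁻ x, ∫⁻ y, ENNReal.ofReal (p x * q y * W x y) ∂ν ∂μ ≠ ∞)
    (s : Finset κ) (k : κ → ι) (j : κ → ι') :
    ∫ a, ∫ b, (∏ i, p (a i)) * (∏ i, q (b i)) * ∑ m ∈ s, W (a (k m)) (b (j m))
        ∂Measure.pi (fun _ => ν) ∂Measure.pi (fun _ => μ)
      = #s * (∫⁻ x, ∫⁻ y, ENNReal.ofReal (p x * q y * W x y) ∂ν ∂μ).toReal := by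
  have hprod_nonneg : ∀ (a : ι → α) (b : ι' → β), 0 ≤ (∏ i, p (a i)) * ∏ i, q (b i) :=
    fun a b => mul_nonneg (prod_nonneg fun i _ => hp0 _) (prod_nonneg fun i _ => hq0 _)
  have hofReal : ∀ (a : ι → α) (b : ι' → β),
      ENNReal.ofReal ((∏ i, p (a i)) * (∏ i, q (b i)) * ∑ m ∈ s, W (a (k m)) (b (j m)))
        = (∏ i, ENNReal.ofReal (p (a i))) * (∏ i, ENNReal.ofReal (q (b i)))
          * ∑ m ∈ s, ENNReal.ofReal (W (a (k m)) (b (j m))) := fun a b => by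
    rw [ENNReal.ofReal_mul (hprod_nonneg a b), ENNReal.ofReal_mul (prod_nonneg fun i _ => hp0 _),
      ENNReal.ofReal_prod_of_nonneg fun i _ => hp0 _,
      ENNReal.ofReal_prod_of_nonneg fun i _ => hq0 _,
      ENNReal.ofReal_sum_of_nonneg fun m _ => hW0 _ _]
  have hofReal_mul : ∀ x y, ENNReal.ofReal (p x * q y * W x y)
      = ENNReal.ofReal (p x) * ENNReal.ofReal (q y) * ENNReal.ofReal (W x y) := fun x y => by
    rw [ENNReal.ofReal_mul (mul_nonneg (hp0 _) (hq0 _)), ENNReal.ofReal_mul (hp0 _)]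
  have hlint := lintegral_pi_lintegral_pi_prod_mul_sum hp.ennreal_ofReal hq.ennreal_ofReal
    (lintegral_ofReal_eq_one_of_integral_eq_one hp0 hp1)
    (lintegral_ofReal_eq_one_of_integral_eq_one hq0 hq1)
    (K := fun x y => ENNReal.ofReal (W x y)) hW.ennreal_ofReal s k j
  simp_rw [← hofReal, ← hofReal_mul] at hlint
  rw [integral_integral_eq_toReal_lintegral_lintegral (by fun_prop)
      (fun a b => mul_nonneg (hprod_nonneg a b) (sum_nonneg fun m _ => hW0 _ _))
      (hlint ▸ ENNReal.mul_ne_top (ENNReal.natCast_ne_top _) hfin),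
    hlint, ENNReal.toReal_mul, ENNReal.toReal_natCast]

end

theorem dpf_integrand_eq (N L : ℕ) [NeZero N] (p0 : ℝ → ℝ) (ptrans : ℝ → ℝ → ℝ)
    (pobs g : ℝ → ℝ) (a b : Fin N → ℝ) :
    (∑ j : Fin N, (N : ℝ)⁻¹ * pobs (b j) *
        ((L : ℝ)⁻¹ * ∑ l ∈ range L, ptrans (a (j + (l : Fin N))) (b j)) / g (b j)) *
      ((∏ j : Fin N, p0 (a j)) * ∏ j : Fin N, g (b j))
      = ((N : ℝ)⁻¹ * (L : ℝ)⁻¹) * ((∏ i, p0 (a i)) * (∏ i, g (b i)) *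
          ∑ m ∈ (univ : Finset (Fin N)) ×ˢ range L,
            pobs (b m.1) * ptrans (a (m.1 + (m.2 : Fin N))) (b m.1) / g (b m.1)) := by
  simp only [sum_product, mul_sum, sum_mul, sum_div]
  exact sum_congr rfl fun j _ => sum_congr rfl fun l _ => by ring

theorem ae_lintegral_ofReal_eq_zero_of_proposal_eq_zero {p0 : ℝ → ℝ} {ptrans : ℝ → ℝ → ℝ}
    {pobs g : ℝ → ℝ} (hp00 : ∀ x, 0 ≤ p0 x) (hptrans0 : ∀ x x', 0 ≤ ptrans x x')
    (hpobs0 : ∀ x, 0 ≤ pobs x)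
    (hgpos : ∀ x1, 0 < pobs x1 * ∫ x0, ptrans x0 x1 * p0 x0 → 0 < g x1)
    (hfin : Integrable (fun q : ℝ × ℝ => pobs q.2 * ptrans q.1 q.2 * p0 q.1) volume) :
    ∀ᵐ x1, g x1 = 0 → ∫⁻ x0, ENNReal.ofReal (pobs x1 * ptrans x0 x1 * p0 x0) = 0 := by
  filter_upwards [hfin.prod_left_ae] with x1 hslice hg0
  rw [← ofReal_integral_eq_lintegral_ofReal hslice
      (ae_of_all _ fun x0 => mul_nonneg (mul_nonneg (hpobs0 _) (hptrans0 _ _)) (hp00 _)),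
    ENNReal.ofReal_eq_zero]
  simp_rw [mul_assoc, integral_const_mul]
  exact not_lt.mp fun h => (hgpos x1 h).ne' hg0

theorem dpf_one_step_unbiased_general
    (N L : ℕ) [NeZero N] (hL1 : 1 ≤ L)
    (p0 : ℝ → ℝ) (ptrans : ℝ → ℝ → ℝ) (pobs : ℝ → ℝ) (g : ℝ → ℝ)
    (hp0 : Measurable p0) (hp00 : ∀ x, 0 ≤ p0 x) (hp0dens : ∫ x, p0 x = 1)
    (hptrans : Measurable fun q : ℝ × ℝ => ptrans q.1 q.2)
    (hptrans0 : ∀ x x', 0 ≤ ptrans x x')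
    (hpobs : Measurable pobs) (hpobs0 : ∀ x, 0 ≤ pobs x)
    (hg : Measurable g) (hg0 : ∀ x, 0 ≤ g x) (hgdens : ∫ x, g x = 1)
    (hgpos : ∀ x1, 0 < pobs x1 * ∫ x0, ptrans x0 x1 * p0 x0 → 0 < g x1)
    (hfin : Integrable (fun q : ℝ × ℝ => pobs q.2 * ptrans q.1 q.2 * p0 q.1) volume) :
    ∫ a : Fin N → ℝ, ∫ b : Fin N → ℝ,
        (∑ j : Fin N, (N : ℝ)⁻¹ * pobs (b j) *
            ((L : ℝ)⁻¹ * ∑ l ∈ Finset.range L, ptrans (a (j + (l : Fin N))) (b j))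
              / g (b j)) *
          ((∏ j : Fin N, p0 (a j)) * ∏ j : Fin N, g (b j))
      = ∫ x0 : ℝ, ∫ x1 : ℝ, pobs x1 * ptrans x0 x1 * p0 x0 := by
  have hptrans' : Measurable (Function.uncurry ptrans) := hptrans
  have htarget_fin : ∫⁻ x0, ∫⁻ x1, ENNReal.ofReal (pobs x1 * ptrans x0 x1 * p0 x0) ≠ ∞ := by
    rw [← lintegral_prod (fun q : ℝ × ℝ => ENNReal.ofReal (pobs q.2 * ptrans q.1 q.2 * p0 q.1))
      (by fun_prop), ← Measure.volume_eq_prod]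
    exact hfin.lintegral_lt_top.ne
  have hreweight :
      ∫⁻ x0, ∫⁻ x1, ENNReal.ofReal (p0 x0 * g x1 * (pobs x1 * ptrans x0 x1 / g x1))
        = ∫⁻ x0, ∫⁻ x1, ENNReal.ofReal (pobs x1 * ptrans x0 x1 * p0 x0) := by
    simp_rw [show ∀ x0 x1, p0 x0 * g x1 * (pobs x1 * ptrans x0 x1 / g x1)
      = g x1 * (pobs x1 * ptrans x0 x1 * p0 x0 / g x1) from fun _ _ => by ring]
    exact lintegral_lintegral_ofReal_mul_div (by fun_prop) hg hg0
      (ae_lintegral_ofReal_eq_zero_of_proposal_eq_zero hp00 hptrans0 hpobs0 hgpos hfin)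
  simp_rw [dpf_integrand_eq, integral_const_mul, volume_pi]
  rw [integral_pi_integral_pi_prod_mul_sum (W := fun x0 x1 => pobs x1 * ptrans x0 x1 / g x1)
      hp0 hg hp00 hg0 hp0dens hgdens (by fun_prop)
      (fun _ _ => div_nonneg (mul_nonneg (hpobs0 _) (hptrans0 _ _)) (hg0 _))
      (hreweight ▸ htarget_fin),
    hreweight, integral_integral_eq_toReal_lintegral_lintegral (by fun_prop)
      (fun _ _ => mul_nonneg (mul_nonneg (hpobs0 _) (hptrans0 _ _)) (hp00 _)) htarget_fin,
    card_product, card_univ, Fintype.card_fin, card_range, Nat.cast_mul]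
  have hN : (N : ℝ) ≠ 0 := Nat.cast_ne_zero.mpr (NeZero.ne N)
  have hL : (L : ℝ) ≠ 0 := Nat.cast_ne_zero.mpr (by omega)
  field_simp

/-- One-step (`T = 1`) unbiasedness of the DPF with `L` cyclic-permutation
matches.  Initial particles `a j` are i.i.d. from `p0`, new particles `b j`
are i.i.d. from the positive proposal `g`, and
`w_1^{[j]} = (1/N) p(y_1|b_j) (1/L) ∑_l p(b_j | a_{k_{l,j}}) / g(b_j)`.
Then `E[∑_j w_1^{[j]}] = ∫∫ p(y_1|x_1) p(x_1|x_0) p(x_0) dx_1 dx_0 = p(y_1)`. -/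
theorem dpf_one_step_unbiased
    (N L : ℕ) [NeZero N] (hL1 : 1 ≤ L) (hLN : L ≤ N)
    (p0 : ℝ → ℝ) (ptrans : ℝ → ℝ → ℝ) (pobs : ℝ → ℝ) (g : ℝ → ℝ)
    (hp0 : Measurable p0) (hp00 : ∀ x, 0 ≤ p0 x) (hp0dens : ∫ x, p0 x = 1)
    (hptrans : Measurable fun q : ℝ × ℝ => ptrans q.1 q.2)
    (hptrans0 : ∀ x x', 0 ≤ ptrans x x')
    (hptransdens : ∀ x', ∫ x, ptrans x' x = 1)
    (hpobs : Measurable pobs) (hpobs0 : ∀ x, 0 ≤ pobs x)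
    (hg : Measurable g) (hg0 : ∀ x, 0 ≤ g x) (hgdens : ∫ x, g x = 1)
    (hgpos : ∀ x1, 0 < pobs x1 * ∫ x0, ptrans x0 x1 * p0 x0 → 0 < g x1)
    (hfin : Integrable (fun q : ℝ × ℝ => pobs q.2 * ptrans q.1 q.2 * p0 q.1) volume) :
    ∫ a : Fin N → ℝ, ∫ b : Fin N → ℝ,
        (∑ j : Fin N, (N : ℝ)⁻¹ * pobs (b j) *
            ((L : ℝ)⁻¹ * ∑ l ∈ Finset.range L, ptrans (a (j + (l : Fin N))) (b j))
              / g (b j)) *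
          ((∏ j : Fin N, p0 (a j)) * ∏ j : Fin N, g (b j))
      = ∫ x0 : ℝ, ∫ x1 : ℝ, pobs x1 * ptrans x0 x1 * p0 x0 :=
  dpf_one_step_unbiased_general N L hL1 p0 ptrans pobs g hp0 hp00 hp0dens hptrans hptrans0 hpobs
    hpobs0 hg hg0 hgdens hgpos hfin
end

section
/- Let p(y_{1:T}|θ, u) be a nonnegative function with E_u[p(y_{1:T}|θ, u)] = p(y_{1:T}|θ) for every θ, where u ~ p(u) independent of θ. Define the joint density p(θ, u | y_{1:T}) ∝ p(y_{1:T}|θ, u) p(θ) p(u). Then the θ-marginal of this joint density equals the exact posterior: ∫ p(θ, u | y_{1:T}) du = p(θ | y_{1:T}) ∝ p(y_{1:T}|θ) p(θ). (Validity of pseudo-marginal / PMMH targeting.) -/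
open MeasureTheory

/-- Validity of pseudo-marginal (PMMH) targeting: if `p̂(y|θ,u) = like θ u` is a
nonnegative unbiased estimator of the likelihood `L θ` when `u ~ pu`, then the
`θ`-marginal of the extended target
`p(θ,u|y) = like θ u * pθ θ * pu u / Z` is the exact posterior
`L θ * pθ θ / Z`, where `Z = ∫ L θ pθ θ dθ ∈ (0,∞)`. -/
theorem pseudo_marginal_valid
    (like : ℝ → ℝ → ℝ) (pθ pu Lfun : ℝ → ℝ)
    (hlike : Measurable fun q : ℝ × ℝ => like q.1 q.2)
    (hlike0 : ∀ θ u, 0 ≤ like θ u)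
    (hpθ : Measurable pθ) (hpθ0 : ∀ θ, 0 ≤ pθ θ) (hpθdens : ∫ θ, pθ θ = 1)
    (hpu : Measurable pu) (hpu0 : ∀ u, 0 ≤ pu u) (hpudens : ∫ u, pu u = 1)
    (hunbiased : ∀ θ, ∫ u, like θ u * pu u = Lfun θ)
    (hintu : ∀ θ, Integrable (fun u => like θ u * pu u) volume)
    (Z : ℝ) (hZ : Z = ∫ θ, Lfun θ * pθ θ) (hZpos : 0 < Z) :
    ∀ θ : ℝ, ∫ u, like θ u * pθ θ * pu u / Z = Lfun θ * pθ θ / Z := by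
  intro θ
  have h : (fun u => like θ u * pθ θ * pu u / Z)
      = fun u => (like θ u * pu u) * (pθ θ / Z) := by
    funext u; ring
  rw [h, integral_mul_const, hunbiased θ, mul_div_assoc]
end

section
/- Under the setting of the previous statement, the Metropolis–Hastings algorithm on the extended space (θ, u) with proposal q(θ^c|θ) p(u^c) and acceptance probability α = min{1, [p̂_{u^c}(y|θ^c) p(θ^c) q(θ|θ^c)] / [p̂_u(y|θ) p(θ) q(θ^c|θ)]} satisfies detailed balance with respect to the extended target π(θ, u) ∝ p̂_u(y|θ) p(θ) p(u); hence π is an invariant distribution of the chain. -/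
lemma mh_min_aux (A B : ℝ) (hA : 0 ≤ A) (hB : 0 ≤ B) :
    A * min 1 (B / A) = B * min 1 (A / B) := by
  rcases eq_or_lt_of_le hA with hA0 | hA0
  · rcases eq_or_lt_of_le hB with hB0 | hB0
    · simp [← hA0, ← hB0]
    · simp [← hA0, div_nonneg hB hA, min_eq_right, hB0.le]
  · rcases eq_or_lt_of_le hB with hB0 | hB0
    · simp [← hB0, min_eq_right, div_nonneg hA0.le hB0.le]
    · rw [mul_min_of_nonneg _ _ hA0.le, mul_min_of_nonneg _ _ hB0.le,
        mul_one, mul_one, mul_div_cancel₀ _ hA0.ne', mul_div_cancel₀ _ hB0.ne']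
      exact min_comm _ _


open MeasureTheory

/-- Detailed balance of the pseudo-marginal (PMMH) Metropolis–Hastings chain on
the extended space `(θ, u)`: with extended target
`π(θ,u) = p̂_u(y|θ) p(θ) p(u) / Z`, proposal `q(θᶜ|θ) p(uᶜ)` and acceptance
probability
`α = min{1, [p̂_{uᶜ}(y|θᶜ) p(θᶜ) q(θ|θᶜ)] / [p̂_u(y|θ) p(θ) q(θᶜ|θ)]}`,
detailed balance holds:
`π(θ,u) q(θᶜ|θ) p(uᶜ) α((θ,u)→(θᶜ,uᶜ)) = π(θᶜ,uᶜ) q(θ|θᶜ) p(u) α((θᶜ,uᶜ)→(θ,u))`;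
hence `π` is invariant for the chain. -/
theorem pmmh_detailed_balance
    (like : ℝ → ℝ → ℝ) (pθ pu : ℝ → ℝ) (q : ℝ → ℝ → ℝ)  -- `q θ θᶜ` = q(θᶜ|θ)
    (hlike0 : ∀ θ u, 0 ≤ like θ u) (hpθ0 : ∀ θ, 0 ≤ pθ θ)
    (hpu0 : ∀ u, 0 ≤ pu u) (hq0 : ∀ θ θ', 0 ≤ q θ θ')
    (Z : ℝ) (hZpos : 0 < Z)
    (piExt : ℝ → ℝ → ℝ)
    (hpi : ∀ θ u, piExt θ u = like θ u * pθ θ * pu u / Z)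
    (α : ℝ → ℝ → ℝ → ℝ → ℝ)
    (hα : ∀ θ u θc uc, α θ u θc uc
        = min 1 ((like θc uc * pθ θc * q θc θ) / (like θ u * pθ θ * q θ θc))) :
    ∀ θ u θc uc,
      piExt θ u * q θ θc * pu uc * α θ u θc uc
        = piExt θc uc * q θc θ * pu u * α θc uc θ u := by
  intro θ u θc uc
  rw [hpi, hpi, hα, hα]
  have h := mh_min_aux (like θ u * pθ θ * q θ θc) (like θc uc * pθ θc * q θc θ)
    (mul_nonneg (mul_nonneg (hlike0 _ _) (hpθ0 _)) (hq0 _ _))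
    (mul_nonneg (mul_nonneg (hlike0 _ _) (hpθ0 _)) (hq0 _ _))
  field_simp
  field_simp at h
  linear_combination (pu u * pu uc) * h
end
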